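/- Let P and P' be separated distributed places. Then P ∪ P' is a distributed place if and only if one of the following holds: (ins_P = ∅ = ins_{P'} and rem_P = ∅ = rem_{P'}), or (ins_P = ∅ = ins_{P'} and rem_P ≠ ∅ ≠ rem_{P'}), or (ins_P ≠ ∅ ≠ ins_{P'} and rem_P = ∅ = rem_{P'}). -/

import Mathlib

open Set

structure Net (P T : Type) where
  pre : T → Set P
  post : T → Set P
  minit : Set P

variable {P T : Type}

def fireable (N : Net P T) (t : T) (M : Set P) : Prop := N.pre t ⊆ M

def fire (N : Net P T) (t : T) (M : Set P) : Set P := (M \ N.pre t) ∪ N.post t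

def valid (N : Net P T) : Set P → List T → Prop
  | _, [] => True
  | M, t :: σ => fireable N t M ∧ valid N (fire N t M) σ

def runFrom (N : Net P T) (M : Set P) (σ : List T) : Set P :=
  σ.foldl (fun M t => fire N t M) M

def isFiringSeq (N : Net P T) (σ : List T) : Prop := valid N N.minit σ

def reachable (N : Net P T) (M : Set P) : Prop :=
  ∃ σ, isFiringSeq N σ ∧ runFrom N N.minit σ = M

def safe (N : Net P T) : Prop :=
  ∀ M, reachable N M → ∀ t, fireable N t M → (N.post t \ N.pre t) ∩ M = ∅

/-- transitions inserting tokens into some place of `Q` (the set `•Q`). -/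
def preQ (N : Net P T) (Q : Set P) : Set T := {t | (N.post t ∩ Q).Nonempty}

/-- transitions removing tokens from some place of `Q` (the set `Q•`). -/
def postQ (N : Net P T) (Q : Set P) : Set T := {t | (N.pre t ∩ Q).Nonempty}

def adjQ (N : Net P T) (Q : Set P) : Set T := preQ N Q ∪ postQ N Q

def insQ (N : Net P T) (Q : Set P) : Set T := preQ N Q \ postQ N Q

def remQ (N : Net P T) (Q : Set P) : Set T := postQ N Q \ preQ N Q

def readQ (N : Net P T) (Q : Set P) : Set T :=
  {t ∈ adjQ N Q | N.pre t ∩ Q = N.post t ∩ Q}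

def enablesQ (N : Net P T) (Q : Set P) : Set (T × T) :=
  {tu | (Q ∩ (N.post tu.1 \ N.pre tu.1) ∩ N.pre tu.2).Nonempty}

def disablesQ (N : Net P T) (Q : Set P) : Set (T × T) :=
  {tu | (Q ∩ (N.pre tu.1 \ N.post tu.1) ∩ N.pre tu.2).Nonempty}

def postList (N : Net P T) (l : List T) : Set P := ⋃ t ∈ l, N.post t

def epreList (N : Net P T) (l : List T) : Set P := ⋃ t ∈ l, (N.pre t \ N.post t)

def isInSeq (N : Net P T) (Q : Set P) (σ : List T) : Prop :=
  σ ≠ [] ∧ (∀ t ∈ σ, t ∈ insQ N Q ∪ readQ N Q) ∧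
  (∀ t ∈ σ.head?, t ∈ insQ N Q) ∧
  ∀ i (h : i < σ.length), 0 < i →
    Q ∩ N.pre (σ.get ⟨i, h⟩) ⊆ postList N (σ.take i) ∧
    Q ∩ (N.post (σ.get ⟨i, h⟩) \ N.pre (σ.get ⟨i, h⟩)) ∩ postList N (σ.take i) = ∅

def isCInSeq (N : Net P T) (Q : Set P) (σ : List T) : Prop :=
  isInSeq N Q σ ∧ Q ⊆ postList N σ

def isOutSeq (N : Net P T) (Q : Set P) (σ : List T) : Prop :=
  σ ≠ [] ∧ (∀ t ∈ σ, t ∈ remQ N Q ∪ readQ N Q) ∧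
  (∀ t ∈ σ.head?, t ∈ remQ N Q) ∧
  ∀ i (h : i < σ.length), 0 < i →
    Q ∩ N.pre (σ.get ⟨i, h⟩) ⊆ Q \ epreList N (σ.take i)

def isCOutSeq (N : Net P T) (Q : Set P) (σ : List T) : Prop :=
  isOutSeq N Q σ ∧ Q ⊆ epreList N σ

def distPlace (N : Net P T) (Q : Set P) : Prop :=
  Q.Nonempty ∧
  adjQ N Q = insQ N Q ∪ remQ N Q ∪ readQ N Q ∧
  (∀ t ∈ insQ N Q, ∀ u ∈ remQ N Q, (t, u) ∈ enablesQ N Q) ∧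
  (∀ σ, isInSeq N Q σ → ∃ τ, σ <+: τ ∧ isCInSeq N Q τ) ∧
  (∀ σ, isOutSeq N Q σ → ∃ τ, σ <+: τ ∧ isCOutSeq N Q τ)

def pureDP (N : Net P T) (Q : Set P) : Prop := postQ N Q ∩ preQ N Q = ∅

def separated (N : Net P T) (Q R : Set P) : Prop := adjQ N Q ∩ adjQ N R = ∅


attribute [local instance] Classical.propDecidable

section Helpers

variable (N : Net P T)

lemma mem_postList {x : P} {l : List T} : x ∈ postList N l ↔ ∃ t ∈ l, x ∈ N.post t := by
  simp [postList]

lemma mem_epreList {x : P} {l : List T} :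
    x ∈ epreList N l ↔ ∃ t ∈ l, x ∈ N.pre t \ N.post t := by
  simp [epreList]
  tauto

lemma postList_mono {l l' : List T} (h : ∀ t ∈ l, t ∈ l') : postList N l ⊆ postList N l' := by
  intro x hx
  rw [mem_postList] at hx ⊢
  obtain ⟨t, ht, hxt⟩ := hx
  exact ⟨t, h t ht, hxt⟩

lemma epreList_mono {l l' : List T} (h : ∀ t ∈ l, t ∈ l') : epreList N l ⊆ epreList N l' := by
  intro x hx
  rw [mem_epreList] at hx ⊢
  obtain ⟨t, ht, hxt⟩ := hx
  exact ⟨t, h t ht, hxt⟩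

lemma postList_append (l l' : List T) :
    postList N (l ++ l') = postList N l ∪ postList N l' := by
  ext x
  simp [mem_postList, List.mem_append, or_and_right, exists_or]

lemma epreList_append (l l' : List T) :
    epreList N (l ++ l') = epreList N l ∪ epreList N l' := by
  ext x
  simp [mem_epreList, List.mem_append, or_and_right, exists_or]

lemma notAdj {t : T} {Q : Set P} (h : t ∉ adjQ N Q) :
    N.pre t ∩ Q = ∅ ∧ N.post t ∩ Q = ∅ := by
  simp only [adjQ, Set.mem_union, preQ, postQ, Set.mem_setOf_eq, not_or,
    Set.not_nonempty_iff_eq_empty] at h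
  exact ⟨h.2, h.1⟩

lemma insQ_subset {Q : Set P} : insQ N Q ⊆ adjQ N Q := fun _ ht => Or.inl ht.1

lemma remQ_subset {Q : Set P} : remQ N Q ⊆ adjQ N Q := fun _ ht => Or.inr ht.1

lemma readQ_subset {Q : Set P} : readQ N Q ⊆ adjQ N Q := fun _ ht => ht.1

lemma insread_subset {Q : Set P} {t : T} (h : t ∈ insQ N Q ∪ readQ N Q) : t ∈ adjQ N Q :=
  h.elim (fun h => insQ_subset N h) (fun h => readQ_subset N h)

lemma remread_subset {Q : Set P} {t : T} (h : t ∈ remQ N Q ∪ readQ N Q) : t ∈ adjQ N Q :=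
  h.elim (fun h => remQ_subset N h) (fun h => readQ_subset N h)

lemma readQ_pre_nonempty {Q : Set P} {t : T} (h : t ∈ readQ N Q) :
    (N.pre t ∩ Q).Nonempty := by
  obtain ⟨hadj, heq⟩ := h
  rcases hadj with h | h
  · rw [heq]; exact h
  · exact h

lemma readQ_eq {Q : Set P} {t : T} (h : t ∈ readQ N Q) : N.pre t ∩ Q = N.post t ∩ Q := h.2

lemma read_epre {Q : Set P} {t : T} (h : t ∈ readQ N Q) :
    (N.pre t \ N.post t) ∩ Q = ∅ := by
  rw [Set.eq_empty_iff_forall_notMem]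
  rintro x ⟨⟨hx1, hx2⟩, hx3⟩
  have : x ∈ N.post t ∩ Q := by rw [← readQ_eq N h]; exact ⟨hx1, hx3⟩
  exact hx2 this.1

lemma ins_pre_empty {Q : Set P} {t : T} (h : t ∈ insQ N Q) : N.pre t ∩ Q = ∅ := by
  rw [Set.eq_empty_iff_forall_notMem]
  rintro x ⟨hx1, hx2⟩
  exact h.2 ⟨x, hx1, hx2⟩

lemma rem_post_empty {Q : Set P} {t : T} (h : t ∈ remQ N Q) : N.post t ∩ Q = ∅ := by
  rw [Set.eq_empty_iff_forall_notMem]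
  rintro x ⟨hx1, hx2⟩
  exact h.2 ⟨x, hx1, hx2⟩

lemma sep_symm {A B : Set P} (h : separated N A B) : separated N B A := by
  rw [separated, Set.inter_comm]; exact h

lemma sep_notB {A B : Set P} (hsep : separated N A B) {t : T} (ht : t ∈ adjQ N A) :
    t ∉ adjQ N B := fun h2 => Set.eq_empty_iff_forall_notMem.mp hsep t ⟨ht, h2⟩

lemma preQ_union {A B : Set P} : preQ N (A ∪ B) = preQ N A ∪ preQ N B := by
  ext t
  simp [preQ, Set.inter_union_distrib_left, Set.union_nonempty]

lemma postQ_union {A B : Set P} : postQ N (A ∪ B) = postQ N A ∪ postQ N B := by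
  ext t
  simp [postQ, Set.inter_union_distrib_left, Set.union_nonempty]

lemma adjQ_union {A B : Set P} : adjQ N (A ∪ B) = adjQ N A ∪ adjQ N B := by
  ext t
  simp only [adjQ, preQ_union, postQ_union, Set.mem_union]
  tauto

lemma insQ_union {A B : Set P} (hsep : separated N A B) :
    insQ N (A ∪ B) = insQ N A ∪ insQ N B := by
  ext t
  constructor
  · rintro ⟨hpre, hpost⟩
    rw [preQ_union] at hpre
    rw [postQ_union, Set.mem_union] at hpost
    push_neg at hpost
    rcases hpre with h | h
    · exact Or.inl ⟨h, hpost.1⟩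
    · exact Or.inr ⟨h, hpost.2⟩
  · rintro (⟨h1, h2⟩ | ⟨h1, h2⟩)
    · refine ⟨by rw [preQ_union]; exact Or.inl h1, ?_⟩
      rw [postQ_union, Set.mem_union]
      push_neg
      exact ⟨h2, fun hc => sep_notB N hsep (Or.inl h1) (Or.inr hc)⟩
    · refine ⟨by rw [preQ_union]; exact Or.inr h1, ?_⟩
      rw [postQ_union, Set.mem_union]
      push_neg
      exact ⟨fun hc => sep_notB N (sep_symm N hsep) (Or.inl h1) (Or.inr hc), h2⟩

lemma remQ_union {A B : Set P} (hsep : separated N A B) :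
    remQ N (A ∪ B) = remQ N A ∪ remQ N B := by
  ext t
  constructor
  · rintro ⟨hpre, hpost⟩
    rw [postQ_union] at hpre
    rw [preQ_union, Set.mem_union] at hpost
    push_neg at hpost
    rcases hpre with h | h
    · exact Or.inl ⟨h, hpost.1⟩
    · exact Or.inr ⟨h, hpost.2⟩
  · rintro (⟨h1, h2⟩ | ⟨h1, h2⟩)
    · refine ⟨by rw [postQ_union]; exact Or.inl h1, ?_⟩
      rw [preQ_union, Set.mem_union]
      push_neg
      exact ⟨h2, fun hc => sep_notB N hsep (Or.inr h1) (Or.inl hc)⟩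
    · refine ⟨by rw [postQ_union]; exact Or.inr h1, ?_⟩
      rw [preQ_union, Set.mem_union]
      push_neg
      exact ⟨fun hc => sep_notB N (sep_symm N hsep) (Or.inr h1) (Or.inl hc), h2⟩

lemma inter_union_absorb {S A B : Set P} (h : S ∩ B = ∅) : S ∩ (A ∪ B) = S ∩ A := by
  rw [Set.inter_union_distrib_left, h, Set.union_empty]

lemma readQ_union {A B : Set P} (hsep : separated N A B) :
    readQ N (A ∪ B) = readQ N A ∪ readQ N B := by
  ext t
  constructor
  · rintro ⟨hadj, heq⟩
    rw [adjQ_union, Set.mem_union] at hadj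
    rcases hadj with h | h
    · left
      have hB := notAdj N (sep_notB N hsep h)
      refine ⟨h, ?_⟩
      rwa [inter_union_absorb hB.1, inter_union_absorb hB.2] at heq
    · right
      have hA := notAdj N (sep_notB N (sep_symm N hsep) h)
      refine ⟨h, ?_⟩
      rw [Set.union_comm] at heq
      rwa [inter_union_absorb hA.1, inter_union_absorb hA.2] at heq
  · rintro (⟨h1, h2⟩ | ⟨h1, h2⟩)
    · have hB := notAdj N (sep_notB N hsep h1)
      refine ⟨by rw [adjQ_union]; exact Or.inl h1, ?_⟩
      rw [inter_union_absorb hB.1, inter_union_absorb hB.2]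
      exact h2
    · have hA := notAdj N (sep_notB N (sep_symm N hsep) h1)
      refine ⟨by rw [adjQ_union]; exact Or.inr h1, ?_⟩
      rw [Set.union_comm, inter_union_absorb hA.1, inter_union_absorb hA.2]
      exact h2

end Helpers

section Split

variable (N : Net P T)

def inCond (N : Net P T) (Q : Set P) (σ : List T) : Prop :=
  ∀ l₁ t l₂, σ = l₁ ++ t :: l₂ → l₁ ≠ [] →
    Q ∩ N.pre t ⊆ postList N l₁ ∧
    Q ∩ (N.post t \ N.pre t) ∩ postList N l₁ = ∅

def outCond (N : Net P T) (Q : Set P) (σ : List T) : Prop :=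
  ∀ l₁ t l₂, σ = l₁ ++ t :: l₂ → l₁ ≠ [] →
    Q ∩ N.pre t ⊆ Q \ epreList N l₁

lemma cond_iff {σ : List T} {C : T → List T → Prop} :
    (∀ i (h : i < σ.length), 0 < i → C (σ.get ⟨i, h⟩) (σ.take i)) ↔
    (∀ l₁ t l₂, σ = l₁ ++ t :: l₂ → l₁ ≠ [] → C t l₁) := by
  constructor
  · intro h l₁ t l₂ heq hl₁
    have hlen : l₁.length < σ.length := by subst heq; simp
    have h0 : 0 < l₁.length := List.length_pos_iff.mpr hl₁
    have hget : σ.get ⟨l₁.length, hlen⟩ = t := by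
      subst heq; simp [List.getElem_append_right]
    have htake : σ.take l₁.length = l₁ := by
      subst heq; exact List.take_left
    have := h l₁.length hlen h0
    rwa [hget, htake] at this
  · intro h i hi h0
    have hσ : σ = σ.take i ++ σ.get ⟨i, hi⟩ :: σ.drop (i + 1) := by
      conv_lhs => rw [← List.take_append_drop i σ]
      rw [List.drop_eq_getElem_cons hi]
      simp
    have hne' : σ.take i ≠ [] := by
      rw [← List.length_pos_iff, List.length_take]
      omega
    exact h _ _ _ hσ hne'

lemma isInSeq_iff {Q : Set P} {σ : List T} :
    isInSeq N Q σ ↔ σ ≠ [] ∧ (∀ t ∈ σ, t ∈ insQ N Q ∪ readQ N Q) ∧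
      (∀ t ∈ σ.head?, t ∈ insQ N Q) ∧ inCond N Q σ := by
  unfold isInSeq inCond
  refine and_congr_right fun _ => and_congr_right fun _ => and_congr_right fun _ => ?_
  exact cond_iff (C := fun t l₁ => Q ∩ N.pre t ⊆ postList N l₁ ∧
    Q ∩ (N.post t \ N.pre t) ∩ postList N l₁ = ∅)

lemma isOutSeq_iff {Q : Set P} {σ : List T} :
    isOutSeq N Q σ ↔ σ ≠ [] ∧ (∀ t ∈ σ, t ∈ remQ N Q ∪ readQ N Q) ∧
      (∀ t ∈ σ.head?, t ∈ remQ N Q) ∧ outCond N Q σ := by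
  unfold isOutSeq outCond
  refine and_congr_right fun _ => and_congr_right fun _ => and_congr_right fun _ => ?_
  exact cond_iff (C := fun t l₁ => Q ∩ N.pre t ⊆ Q \ epreList N l₁)

lemma filter_split {q : T → Bool} {l m₁ m₂ : List T} {t : T}
    (h : l.filter q = m₁ ++ t :: m₂) :
    ∃ l₁ l₂, l = l₁ ++ t :: l₂ ∧ m₁ = l₁.filter q ∧ m₂ = l₂.filter q := by
  induction l generalizing m₁ with
  | nil => simp at h
  | cons a l ih =>
    by_cases hqa : q a = true
    · rw [List.filter_cons_of_pos hqa] at h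
      cases m₁ with
      | nil =>
        simp only [List.nil_append, List.cons.injEq] at h
        obtain ⟨rfl, h2⟩ := h
        exact ⟨[], l, rfl, rfl, h2.symm⟩
      | cons b m₁' =>
        simp only [List.cons_append, List.cons.injEq] at h
        obtain ⟨rfl, h2⟩ := h
        obtain ⟨l₁, l₂, rfl, h3, h4⟩ := ih h2
        exact ⟨a :: l₁, l₂, rfl, by rw [List.filter_cons_of_pos hqa, h3], h4⟩
    · rw [List.filter_cons_of_neg hqa] at h
      obtain ⟨l₁, l₂, rfl, h3, h4⟩ := ih h
      exact ⟨a :: l₁, l₂, rfl, by rw [List.filter_cons_of_neg hqa]; exact h3, h4⟩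

lemma append_split {x y l₁ l₂ : List T} {t : T} (h : x ++ y = l₁ ++ t :: l₂) :
    (∃ m₁ m₂, x = m₁ ++ t :: m₂ ∧ l₁ = m₁ ∧ l₂ = m₂ ++ y) ∨
    (∃ m₁ m₂, y = m₁ ++ t :: m₂ ∧ l₁ = x ++ m₁ ∧ l₂ = m₂) := by
  induction x generalizing l₁ with
  | nil => exact Or.inr ⟨l₁, l₂, by simpa using h, by simp, rfl⟩
  | cons a x ih =>
    cases l₁ with
    | nil =>
      simp only [List.nil_append, List.cons_append, List.cons.injEq] at h
      obtain ⟨rfl, h2⟩ := h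
      exact Or.inl ⟨[], x, rfl, rfl, h2.symm⟩
    | cons b l₁ =>
      simp only [List.cons_append, List.cons.injEq] at h
      obtain ⟨rfl, h2⟩ := h
      rcases ih h2 with ⟨m₁, m₂, h3, h4, h5⟩ | ⟨m₁, m₂, h3, h4, h5⟩
      · exact Or.inl ⟨a :: m₁, m₂, by rw [h3]; rfl, by rw [h4], h5⟩
      · exact Or.inr ⟨m₁, m₂, h3, by rw [h4]; rfl, h5⟩

lemma exists_first {x : P} {l : List T} (h : x ∈ postList N l) :
    ∃ l₁ t l₂, l = l₁ ++ t :: l₂ ∧ x ∈ N.post t ∧ x ∉ postList N l₁ := by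
  induction l with
  | nil => simp [postList] at h
  | cons a l ih =>
    by_cases hxa : x ∈ N.post a
    · exact ⟨[], a, l, rfl, hxa, by simp [postList]⟩
    · have hx : x ∈ postList N l := by
        rw [mem_postList] at h ⊢
        obtain ⟨t, ht, hxt⟩ := h
        rcases List.mem_cons.mp ht with rfl | ht
        · exact absurd hxt hxa
        · exact ⟨t, ht, hxt⟩
      obtain ⟨l₁, t, l₂, rfl, h1, h2⟩ := ih hx
      refine ⟨a :: l₁, t, l₂, rfl, h1, ?_⟩
      rw [mem_postList]
      rintro ⟨u, hu, hxu⟩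
      rcases List.mem_cons.mp hu with rfl | hu
      · exact hxa hxu
      · exact h2 ((mem_postList N).mpr ⟨u, hu, hxu⟩)

lemma postList_filter_inter {q : T → Bool} {l : List T} {A : Set P}
    (h : ∀ t ∈ l, ¬ q t = true → N.post t ∩ A = ∅) :
    postList N (l.filter q) ∩ A = postList N l ∩ A := by
  ext x
  simp only [Set.mem_inter_iff, mem_postList, List.mem_filter]
  constructor
  · rintro ⟨⟨t, ⟨htl, _⟩, hx⟩, hxA⟩
    exact ⟨⟨t, htl, hx⟩, hxA⟩
  · rintro ⟨⟨t, htl, hx⟩, hxA⟩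
    refine ⟨⟨t, ⟨htl, ?_⟩, hx⟩, hxA⟩
    by_contra hq
    exact Set.eq_empty_iff_forall_notMem.mp (h t htl hq) x ⟨hx, hxA⟩

lemma epreList_filter_inter {q : T → Bool} {l : List T} {A : Set P}
    (h : ∀ t ∈ l, ¬ q t = true → (N.pre t \ N.post t) ∩ A = ∅) :
    epreList N (l.filter q) ∩ A = epreList N l ∩ A := by
  ext x
  simp only [Set.mem_inter_iff, mem_epreList, List.mem_filter]
  constructor
  · rintro ⟨⟨t, ⟨htl, _⟩, hx⟩, hxA⟩
    exact ⟨⟨t, htl, hx⟩, hxA⟩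
  · rintro ⟨⟨t, htl, hx⟩, hxA⟩
    refine ⟨⟨t, ⟨htl, ?_⟩, hx⟩, hxA⟩
    by_contra hq
    exact Set.eq_empty_iff_forall_notMem.mp (h t htl hq) x ⟨hx, hxA⟩

lemma isInSeq_single {Q : Set P} {t : T} (h : t ∈ insQ N Q) : isInSeq N Q [t] := by
  rw [isInSeq_iff]
  refine ⟨by simp, ?_, ?_, ?_⟩
  · intro u hu
    rw [List.mem_singleton] at hu
    subst hu
    exact Or.inl h
  · intro u hu
    simp only [List.head?_cons, Option.mem_def, Option.some.injEq] at hu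
    subst hu
    exact h
  · intro l₁ u l₂ heq hne
    exfalso
    cases l₁ with
    | nil => exact hne rfl
    | cons b l' =>
      simp only [List.cons_append, List.cons.injEq] at heq
      exact absurd heq.2 (by simp)

lemma isOutSeq_single {Q : Set P} {t : T} (h : t ∈ remQ N Q) : isOutSeq N Q [t] := by
  rw [isOutSeq_iff]
  refine ⟨by simp, ?_, ?_, ?_⟩
  · intro u hu
    rw [List.mem_singleton] at hu
    subst hu
    exact Or.inl h
  · intro u hu
    simp only [List.head?_cons, Option.mem_def, Option.some.injEq] at hu
    subst hu
    exact h
  · intro l₁ u l₂ heq hne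
    exfalso
    cases l₁ with
    | nil => exact hne rfl
    | cons b l' =>
      simp only [List.cons_append, List.cons.injEq] at heq
      exact absurd heq.2 (by simp)

lemma getCompIn {A : Set P} {σ : List T} (hA : distPlace N A)
    (hins : (insQ N A).Nonempty) (h : σ = [] ∨ isInSeq N A σ) :
    ∃ τ, σ <+: τ ∧ isCInSeq N A τ := by
  rcases h with rfl | h
  · obtain ⟨t, ht⟩ := hins
    obtain ⟨τ, _, hτ⟩ := hA.2.2.2.1 [t] (isInSeq_single N ht)
    exact ⟨τ, List.nil_prefix, hτ⟩
  · exact hA.2.2.2.1 σ h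

lemma getCompOut {A : Set P} {σ : List T} (hA : distPlace N A)
    (hrem : (remQ N A).Nonempty) (h : σ = [] ∨ isOutSeq N A σ) :
    ∃ τ, σ <+: τ ∧ isCOutSeq N A τ := by
  rcases h with rfl | h
  · obtain ⟨t, ht⟩ := hrem
    obtain ⟨τ, _, hτ⟩ := hA.2.2.2.2 [t] (isOutSeq_single N ht)
    exact ⟨τ, List.nil_prefix, hτ⟩
  · exact hA.2.2.2.2 σ h

end Split

section Filters

variable (N : Net P T)

lemma elems_union {A B : Set P} (hsep : separated N A B) {t : T}
    (ht : t ∈ insQ N (A ∪ B) ∪ readQ N (A ∪ B)) (hadj : t ∈ adjQ N A) :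
    t ∈ insQ N A ∪ readQ N A := by
  rw [insQ_union N hsep, readQ_union N hsep] at ht
  have hB := sep_notB N hsep hadj
  rcases ht with (h | h) | (h | h)
  · exact Or.inl h
  · exact absurd (insQ_subset N h) hB
  · exact Or.inr h
  · exact absurd (readQ_subset N h) hB

lemma filter_inSeq {A B : Set P} (hsep : separated N A B) {σ : List T}
    (hσ : isInSeq N (A ∪ B) σ) :
    σ.filter (fun u => decide (u ∈ adjQ N A)) = [] ∨
      isInSeq N A (σ.filter (fun u => decide (u ∈ adjQ N A))) := by
  rw [isInSeq_iff] at hσ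
  obtain ⟨hne, helem, hhead, hcond⟩ := hσ
  set q : T → Bool := fun u => decide (u ∈ adjQ N A) with hq
  by_cases hnil : σ.filter q = []
  · exact Or.inl hnil
  right
  have hmemq : ∀ t : T, q t = true ↔ t ∈ adjQ N A := by intro t; simp [hq]
  have hmem : ∀ t ∈ σ.filter q, t ∈ insQ N A ∪ readQ N A := by
    intro t ht
    rw [List.mem_filter] at ht
    exact elems_union N hsep (helem t ht.1) ((hmemq t).mp ht.2)
  rw [isInSeq_iff]
  refine ⟨hnil, hmem, ?_, ?_⟩
  · intro t ht
    obtain ⟨t₀, m', hm⟩ := List.exists_cons_of_ne_nil hnil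
    rw [hm] at ht
    simp only [List.head?_cons, Option.mem_def, Option.some.injEq] at ht
    subst ht
    have ht₀mem : t₀ ∈ insQ N A ∪ readQ N A := hmem t₀ (by rw [hm]; exact List.mem_cons_self)
    have ht₀adj : t₀ ∈ adjQ N A := insread_subset N ht₀mem
    obtain ⟨l₁, l₂, hσeq, h1, h2⟩ := filter_split (m₁ := []) (by simpa using hm)
    cases l₁ with
    | nil =>
      have hh : t₀ ∈ insQ N (A ∪ B) := hhead t₀ (by rw [hσeq]; rfl)
      rw [insQ_union N hsep] at hh
      rcases hh with h | h
      · exact h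
      · exact absurd (sep_notB N (sep_symm N hsep) (insQ_subset N h)) (fun hc => hc ht₀adj)
    | cons b l' =>
      rcases ht₀mem with h | h
      · exact h
      · exfalso
        obtain ⟨a, haPre, haA⟩ := readQ_pre_nonempty N h
        have hc1 := (hcond (b :: l') t₀ l₂ hσeq (List.cons_ne_nil _ _)).1
        have : a ∈ postList N (b :: l') := hc1 ⟨Or.inl haA, haPre⟩
        rw [mem_postList] at this
        obtain ⟨u, hu, hau⟩ := this
        have huadj : u ∈ adjQ N A := Or.inl ⟨a, hau, haA⟩
        have : q u = true := (hmemq u).mpr huadj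
        have hnotq : ∀ v ∈ b :: l', ¬ q v = true := by
          intro v hv
          have := List.filter_eq_nil_iff.mp h1.symm
          exact this v hv
        exact hnotq u hu ((hmemq u).mpr huadj)
  · intro m₁ t m₂ hm hm₁ne
    obtain ⟨l₁, l₂, hσeq, h1, h2⟩ := filter_split hm
    have hl₁ne : l₁ ≠ [] := by
      rintro rfl
      simp at h1
      exact hm₁ne h1
    have hC := hcond l₁ t l₂ hσeq hl₁ne
    have hfilt : postList N (l₁.filter q) ∩ A = postList N l₁ ∩ A := by
      refine postList_filter_inter N ?_
      intro u _ hqu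
      exact (notAdj N (fun hc => hqu ((hmemq u).mpr hc))).2
    constructor
    · rintro x ⟨hxA, hxp⟩
      have hx1 : x ∈ postList N l₁ := hC.1 ⟨Or.inl hxA, hxp⟩
      have : x ∈ postList N (l₁.filter q) ∩ A := by
        rw [hfilt]; exact ⟨hx1, hxA⟩
      rw [← h1] at this
      exact this.1
    · rw [Set.eq_empty_iff_forall_notMem]
      rintro x ⟨⟨hxA, hxpp⟩, hxl⟩
      have hxl' : x ∈ postList N (l₁.filter q) := by rw [← h1]; exact hxl
      have hx1 : x ∈ postList N l₁ :=
        postList_mono N (fun u hu => (List.mem_filter.mp hu).1) hxl'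
      exact Set.eq_empty_iff_forall_notMem.mp hC.2 x ⟨⟨Or.inl hxA, hxpp⟩, hx1⟩

lemma filter_outSeq {A B : Set P} (hsep : separated N A B) {σ : List T}
    (hσ : isOutSeq N (A ∪ B) σ) :
    σ.filter (fun u => decide (u ∈ remQ N A)) = [] ∨
      isOutSeq N A (σ.filter (fun u => decide (u ∈ remQ N A))) := by
  rw [isOutSeq_iff] at hσ
  obtain ⟨hne, helem, hhead, hcond⟩ := hσ
  set q : T → Bool := fun u => decide (u ∈ remQ N A) with hq
  by_cases hnil : σ.filter q = []
  · exact Or.inl hnil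
  right
  have hmemq : ∀ t : T, q t = true ↔ t ∈ remQ N A := by intro t; simp [hq]
  rw [isOutSeq_iff]
  refine ⟨hnil, ?_, ?_, ?_⟩
  · intro t ht
    rw [List.mem_filter] at ht
    exact Or.inl ((hmemq t).mp ht.2)
  · intro t ht
    obtain ⟨t₀, m', hm⟩ := List.exists_cons_of_ne_nil hnil
    rw [hm] at ht
    simp only [List.head?_cons, Option.mem_def, Option.some.injEq] at ht
    subst ht
    have : t₀ ∈ σ.filter q := by rw [hm]; exact List.mem_cons_self
    rw [List.mem_filter] at this
    exact (hmemq t₀).mp this.2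
  · intro m₁ t m₂ hm hm₁ne
    obtain ⟨l₁, l₂, hσeq, h1, h2⟩ := filter_split hm
    have hl₁ne : l₁ ≠ [] := by
      rintro rfl
      simp at h1
      exact hm₁ne h1
    have hC := hcond l₁ t l₂ hσeq hl₁ne
    rintro x ⟨hxA, hxp⟩
    obtain ⟨_, hx2⟩ := hC ⟨Or.inl hxA, hxp⟩
    refine ⟨hxA, fun hc => hx2 ?_⟩
    refine epreList_mono N (fun u hu => ?_) hc
    rw [h1] at hu
    exact (List.mem_filter.mp hu).1

end Filters

section MainIn

variable (N : Net P T)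

lemma InExt {A B : Set P} (hsep : separated N A B) (hA : distPlace N A) (hB : distPlace N B)
    (hiA : (insQ N A).Nonempty) (hiB : (insQ N B).Nonempty) :
    ∀ σ, isInSeq N (A ∪ B) σ → ∃ τ, σ <+: τ ∧ isCInSeq N (A ∪ B) τ := by
  intro σ hσ0
  have hσB0 : isInSeq N (B ∪ A) σ := by rwa [Set.union_comm] at hσ0
  obtain ⟨τA, ⟨tailA, hτA⟩, hCA⟩ := getCompIn N hA hiA (filter_inSeq N hsep hσ0)
  obtain ⟨τB, ⟨tailB, hτB⟩, hCB⟩ := getCompIn N hB hiB (filter_inSeq N (sep_symm N hsep) hσB0)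
  set qA : T → Bool := fun u => decide (u ∈ adjQ N A) with hqA
  set qB : T → Bool := fun u => decide (u ∈ adjQ N B) with hqB
  replace hτA := hτA.symm
  replace hτB := hτB.symm
  rw [isInSeq_iff] at hσ0
  obtain ⟨hne, helem, hhead, hcond⟩ := hσ0
  have hCAin := hCA.1
  rw [isInSeq_iff] at hCAin
  obtain ⟨hAne, hAelem, hAhead, hAcond⟩ := hCAin
  have hCBin := hCB.1
  rw [isInSeq_iff] at hCBin
  obtain ⟨hBne, hBelem, hBhead, hBcond⟩ := hCBin
  -- basic facts
  have hpostσA : postList N σ ∩ A = postList N (σ.filter qA) ∩ A :=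
    (postList_filter_inter N (fun u _ hq =>
      (notAdj N (fun hc => hq (by simp [hqA, hc]))).2)).symm
  have hpostσB : postList N σ ∩ B = postList N (σ.filter qB) ∩ B :=
    (postList_filter_inter N (fun u _ hq =>
      (notAdj N (fun hc => hq (by simp [hqB, hc]))).2)).symm
  have htailA_mem : ∀ t ∈ tailA, t ∈ insQ N A ∪ readQ N A := by
    intro t ht
    exact hAelem t (by rw [hτA]; exact List.mem_append_right _ ht)
  have htailB_mem : ∀ t ∈ tailB, t ∈ insQ N B ∪ readQ N B := by
    intro t ht
    exact hBelem t (by rw [hτB]; exact List.mem_append_right _ ht)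
  have htailA_adj : ∀ t ∈ tailA, t ∈ adjQ N A := fun t ht => insread_subset N (htailA_mem t ht)
  have htailB_adj : ∀ t ∈ tailB, t ∈ adjQ N B := fun t ht => insread_subset N (htailB_mem t ht)
  refine ⟨σ ++ (tailA ++ tailB), ⟨tailA ++ tailB, rfl⟩, ?_, ?_⟩
  · -- isInSeq
    rw [isInSeq_iff]
    refine ⟨fun h => hne (List.append_eq_nil_iff.mp h).1, ?_, ?_, ?_⟩
    · -- elements
      intro t ht
      rcases List.mem_append.mp ht with h | h
      · exact helem t h
      · rw [insQ_union N hsep, readQ_union N hsep]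
        rcases List.mem_append.mp h with h' | h'
        · rcases htailA_mem t h' with h'' | h''
          · exact Or.inl (Or.inl h'')
          · exact Or.inr (Or.inl h'')
        · rcases htailB_mem t h' with h'' | h''
          · exact Or.inl (Or.inr h'')
          · exact Or.inr (Or.inr h'')
    · -- head
      intro t ht
      obtain ⟨s₀, σ', hσeq⟩ := List.exists_cons_of_ne_nil hne
      rw [hσeq, List.cons_append] at ht
      simp only [List.head?_cons, Option.mem_def, Option.some.injEq] at ht
      subst ht
      exact hhead _ (by rw [hσeq]; rfl)
    · -- main condition
      intro l₁ t l₂ hsplit hl₁ne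
      rcases append_split hsplit with ⟨m₁, m₂, hx, hl1, _⟩ | ⟨m₁, m₂, hy, hl1, _⟩
      · -- t inside σ
        subst hl1
        exact hcond l₁ t m₂ hx hl₁ne
      · -- t inside tailA ++ tailB
        rcases append_split hy with ⟨n₁, n₂, hx2, hm1, _⟩ | ⟨k₁, k₂, hy2, hm1, _⟩
        · -- t inside tailA
          subst hm1
          subst hl1
          have htA : t ∈ insQ N A ∪ readQ N A := htailA_mem t (by rw [hx2]; simp)
          have hadjA : t ∈ adjQ N A := insread_subset N htA
          have hBem := notAdj N (sep_notB N hsep hadjA)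
          have key : A ∩ N.pre t ⊆ postList N (σ.filter qA ++ m₁) ∧
              A ∩ (N.post t \ N.pre t) ∩ postList N (σ.filter qA ++ m₁) = ∅ := by
            by_cases hce : σ.filter qA ++ m₁ = []
            · rw [hce]
              have hfnil : σ.filter qA = [] := (List.append_eq_nil_iff.mp hce).1
              have hm₁nil : m₁ = [] := (List.append_eq_nil_iff.mp hce).2
              have hτAeq : τA = t :: n₂ := by
                rw [hτA, hx2, hfnil, hm₁nil]
                rfl
              have htins : t ∈ insQ N A := hAhead t (by rw [hτAeq]; rfl)
              have hpre : N.pre t ∩ A = ∅ := ins_pre_empty N htins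
              constructor
              · rintro x ⟨hxA, hxp⟩
                have : x ∈ N.pre t ∩ A := ⟨hxp, hxA⟩
                rw [hpre] at this
                exact this.elim
              · simp [postList]
            · exact hAcond (σ.filter qA ++ m₁) t n₂
                (by rw [hτA, hx2, List.append_assoc]) hce
          constructor
          · rintro x ⟨hxAB, hxp⟩
            rcases hxAB with hxA | hxB
            · have hx1 := key.1 ⟨hxA, hxp⟩
              rw [postList_append] at hx1
              rw [postList_append]
              rcases hx1 with h | h
              · left
                have : x ∈ postList N (σ.filter qA) ∩ A := ⟨h, hxA⟩
                rw [← hpostσA] at this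
                exact this.1
              · right
                exact h
            · exfalso
              have : x ∈ N.pre t ∩ B := ⟨hxp, hxB⟩
              rw [hBem.1] at this
              exact this.elim
          · rw [Set.eq_empty_iff_forall_notMem]
            rintro x ⟨⟨hxAB, hxpp⟩, hxl⟩
            rcases hxAB with hxA | hxB
            · have hx' : x ∈ postList N (σ.filter qA ++ m₁) := by
                rw [postList_append] at hxl ⊢
                rcases hxl with h | h
                · left
                  have : x ∈ postList N σ ∩ A := ⟨h, hxA⟩
                  rw [hpostσA] at this
                  exact this.1
                · right
                  exact h
              exact Set.eq_empty_iff_forall_notMem.mp key.2 x ⟨⟨hxA, hxpp⟩, hx'⟩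
            · have : x ∈ N.post t ∩ B := ⟨hxpp.1, hxB⟩
              rw [hBem.2] at this
              exact this.elim
        · -- t inside tailB
          subst hm1
          subst hl1
          have htB : t ∈ insQ N B ∪ readQ N B := htailB_mem t (by rw [hy2]; simp)
          have hadjB : t ∈ adjQ N B := insread_subset N htB
          have hAem := notAdj N (sep_notB N (sep_symm N hsep) hadjB)
          have htailA_postB : ∀ u ∈ tailA, N.post u ∩ B = ∅ := fun u hu =>
            (notAdj N (sep_notB N hsep (htailA_adj u hu))).2
          have key : B ∩ N.pre t ⊆ postList N (σ.filter qB ++ k₁) ∧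
              B ∩ (N.post t \ N.pre t) ∩ postList N (σ.filter qB ++ k₁) = ∅ := by
            by_cases hce : σ.filter qB ++ k₁ = []
            · rw [hce]
              have hfnil : σ.filter qB = [] := (List.append_eq_nil_iff.mp hce).1
              have hk₁nil : k₁ = [] := (List.append_eq_nil_iff.mp hce).2
              have hτBeq : τB = t :: k₂ := by
                rw [hτB, hy2, hfnil, hk₁nil]
                rfl
              have htins : t ∈ insQ N B := hBhead t (by rw [hτBeq]; rfl)
              have hpre : N.pre t ∩ B = ∅ := ins_pre_empty N htins
              constructor
              · rintro x ⟨hxB, hxp⟩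
                have : x ∈ N.pre t ∩ B := ⟨hxp, hxB⟩
                rw [hpre] at this
                exact this.elim
              · simp [postList]
            · exact hBcond (σ.filter qB ++ k₁) t k₂
                (by rw [hτB, hy2, List.append_assoc]) hce
          constructor
          · rintro x ⟨hxAB, hxp⟩
            rcases hxAB with hxA | hxB
            · exfalso
              have : x ∈ N.pre t ∩ A := ⟨hxp, hxA⟩
              rw [hAem.1] at this
              exact this.elim
            · have hx1 := key.1 ⟨hxB, hxp⟩
              rw [postList_append] at hx1
              rw [postList_append, postList_append]
              rcases hx1 with h | h
              · left
                have : x ∈ postList N (σ.filter qB) ∩ B := ⟨h, hxB⟩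
                rw [← hpostσB] at this
                exact this.1
              · right
                right
                exact h
          · rw [Set.eq_empty_iff_forall_notMem]
            rintro x ⟨⟨hxAB, hxpp⟩, hxl⟩
            rcases hxAB with hxA | hxB
            · have : x ∈ N.post t ∩ A := ⟨hxpp.1, hxA⟩
              rw [hAem.2] at this
              exact this.elim
            · have hx' : x ∈ postList N (σ.filter qB ++ k₁) := by
                rw [postList_append, postList_append] at hxl
                rw [postList_append]
                rcases hxl with h | h | h
                · left
                  have : x ∈ postList N σ ∩ B := ⟨h, hxB⟩
                  rw [hpostσB] at this
                  exact this.1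
                · exfalso
                  rw [mem_postList] at h
                  obtain ⟨u, hu, hxu⟩ := h
                  have : x ∈ N.post u ∩ B := ⟨hxu, hxB⟩
                  rw [htailA_postB u hu] at this
                  exact this.elim
                · right
                  exact h
              exact Set.eq_empty_iff_forall_notMem.mp key.2 x ⟨⟨hxB, hxpp⟩, hx'⟩
  · -- coverage
    rintro x (hx | hx)
    · have hx1 : x ∈ postList N τA := hCA.2 hx
      rw [hτA, postList_append] at hx1
      rw [postList_append, postList_append]
      rcases hx1 with h | h
      · exact Or.inl (postList_mono N (fun u hu => (List.mem_filter.mp hu).1) h)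
      · exact Or.inr (Or.inl h)
    · have hx1 : x ∈ postList N τB := hCB.2 hx
      rw [hτB, postList_append] at hx1
      rw [postList_append, postList_append]
      rcases hx1 with h | h
      · exact Or.inl (postList_mono N (fun u hu => (List.mem_filter.mp hu).1) h)
      · exact Or.inr (Or.inr h)

end MainIn

section MainOut

variable (N : Net P T)

lemma OutExt {A B : Set P} (hsep : separated N A B) (hA : distPlace N A) (hB : distPlace N B)
    (hrA : (remQ N A).Nonempty) (hrB : (remQ N B).Nonempty) :
    ∀ σ, isOutSeq N (A ∪ B) σ → ∃ τ, σ <+: τ ∧ isCOutSeq N (A ∪ B) τ := by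
  intro σ hσ0
  have hσB0 : isOutSeq N (B ∪ A) σ := by rwa [Set.union_comm] at hσ0
  obtain ⟨τA, ⟨tailA, hτA⟩, hCA⟩ := getCompOut N hA hrA (filter_outSeq N hsep hσ0)
  obtain ⟨τB, ⟨tailB, hτB⟩, hCB⟩ := getCompOut N hB hrB (filter_outSeq N (sep_symm N hsep) hσB0)
  set qA : T → Bool := fun u => decide (u ∈ remQ N A) with hqA
  set qB : T → Bool := fun u => decide (u ∈ remQ N B) with hqB
  replace hτA := hτA.symm
  replace hτB := hτB.symm
  rw [isOutSeq_iff] at hσ0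
  obtain ⟨hne, helem, hhead, hcond⟩ := hσ0
  have hCAin := hCA.1
  rw [isOutSeq_iff] at hCAin
  obtain ⟨hAne, hAelem, hAhead, hAcond⟩ := hCAin
  have hCBin := hCB.1
  rw [isOutSeq_iff] at hCBin
  obtain ⟨hBne, hBelem, hBhead, hBcond⟩ := hCBin
  -- every element of σ not in remQ A contributes nothing to epreList ∩ A
  have hσepreA : ∀ u ∈ σ, ¬ qA u = true → (N.pre u \ N.post u) ∩ A = ∅ := by
    intro u hu hq
    have hq' : u ∉ remQ N A := fun hc => hq (by simp [hqA, hc])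
    rcases helem u hu with h | h
    · rw [remQ_union N hsep] at h
      rcases h with h | h
      · exact absurd h hq'
      · have := (notAdj N (sep_notB N (sep_symm N hsep) (remQ_subset N h))).1
        rw [Set.eq_empty_iff_forall_notMem]
        rintro x ⟨⟨hx1, _⟩, hx3⟩
        exact Set.eq_empty_iff_forall_notMem.mp this x ⟨hx1, hx3⟩
    · rw [readQ_union N hsep] at h
      rcases h with h | h
      · exact read_epre N h
      · have := (notAdj N (sep_notB N (sep_symm N hsep) (readQ_subset N h))).1
        rw [Set.eq_empty_iff_forall_notMem]
        rintro x ⟨⟨hx1, _⟩, hx3⟩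
        exact Set.eq_empty_iff_forall_notMem.mp this x ⟨hx1, hx3⟩
  have hσepreB : ∀ u ∈ σ, ¬ qB u = true → (N.pre u \ N.post u) ∩ B = ∅ := by
    intro u hu hq
    have hq' : u ∉ remQ N B := fun hc => hq (by simp [hqB, hc])
    rcases helem u hu with h | h
    · rw [remQ_union N hsep] at h
      rcases h with h | h
      · have := (notAdj N (sep_notB N hsep (remQ_subset N h))).1
        rw [Set.eq_empty_iff_forall_notMem]
        rintro x ⟨⟨hx1, _⟩, hx3⟩
        exact Set.eq_empty_iff_forall_notMem.mp this x ⟨hx1, hx3⟩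
      · exact absurd h hq'
    · rw [readQ_union N hsep] at h
      rcases h with h | h
      · have := (notAdj N (sep_notB N hsep (readQ_subset N h))).1
        rw [Set.eq_empty_iff_forall_notMem]
        rintro x ⟨⟨hx1, _⟩, hx3⟩
        exact Set.eq_empty_iff_forall_notMem.mp this x ⟨hx1, hx3⟩
      · exact read_epre N h
  have hepreσA : epreList N σ ∩ A = epreList N (σ.filter qA) ∩ A :=
    (epreList_filter_inter N hσepreA).symm
  have hepreσB : epreList N σ ∩ B = epreList N (σ.filter qB) ∩ B :=
    (epreList_filter_inter N hσepreB).symm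
  have htailA_mem : ∀ t ∈ tailA, t ∈ remQ N A ∪ readQ N A := by
    intro t ht
    exact hAelem t (by rw [hτA]; exact List.mem_append_right _ ht)
  have htailB_mem : ∀ t ∈ tailB, t ∈ remQ N B ∪ readQ N B := by
    intro t ht
    exact hBelem t (by rw [hτB]; exact List.mem_append_right _ ht)
  have htailA_adj : ∀ t ∈ tailA, t ∈ adjQ N A := fun t ht => remread_subset N (htailA_mem t ht)
  have htailB_adj : ∀ t ∈ tailB, t ∈ adjQ N B := fun t ht => remread_subset N (htailB_mem t ht)
  refine ⟨σ ++ (tailA ++ tailB), ⟨tailA ++ tailB, rfl⟩, ?_, ?_⟩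
  · -- isOutSeq
    rw [isOutSeq_iff]
    refine ⟨fun h => hne (List.append_eq_nil_iff.mp h).1, ?_, ?_, ?_⟩
    · intro t ht
      rcases List.mem_append.mp ht with h | h
      · exact helem t h
      · rw [remQ_union N hsep, readQ_union N hsep]
        rcases List.mem_append.mp h with h' | h'
        · rcases htailA_mem t h' with h'' | h''
          · exact Or.inl (Or.inl h'')
          · exact Or.inr (Or.inl h'')
        · rcases htailB_mem t h' with h'' | h''
          · exact Or.inl (Or.inr h'')
          · exact Or.inr (Or.inr h'')
    · intro t ht
      obtain ⟨s₀, σ', hσeq⟩ := List.exists_cons_of_ne_nil hne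
      rw [hσeq, List.cons_append] at ht
      simp only [List.head?_cons, Option.mem_def, Option.some.injEq] at ht
      subst ht
      exact hhead _ (by rw [hσeq]; rfl)
    · intro l₁ t l₂ hsplit hl₁ne
      rcases append_split hsplit with ⟨m₁, m₂, hx, hl1, _⟩ | ⟨m₁, m₂, hy, hl1, _⟩
      · subst hl1
        exact hcond l₁ t m₂ hx hl₁ne
      · rcases append_split hy with ⟨n₁, n₂, hx2, hm1, _⟩ | ⟨k₁, k₂, hy2, hm1, _⟩
        · -- t inside tailA
          subst hm1
          subst hl1
          have htA : t ∈ remQ N A ∪ readQ N A := htailA_mem t (by rw [hx2]; simp)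
          have hadjA : t ∈ adjQ N A := remread_subset N htA
          have hBem := notAdj N (sep_notB N hsep hadjA)
          have key : A ∩ N.pre t ⊆ A \ epreList N (σ.filter qA ++ m₁) := by
            by_cases hce : σ.filter qA ++ m₁ = []
            · rw [hce]
              rintro x ⟨hxA, _⟩
              refine ⟨hxA, ?_⟩
              simp [epreList]
            · exact hAcond (σ.filter qA ++ m₁) t n₂
                (by rw [hτA, hx2, List.append_assoc]) hce
          rintro x ⟨hxAB, hxp⟩
          rcases hxAB with hxA | hxB
          · obtain ⟨_, hxnot⟩ := key ⟨hxA, hxp⟩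
            refine ⟨Or.inl hxA, fun hc => ?_⟩
            rw [epreList_append] at hc
            rcases hc with h | h
            · have : x ∈ epreList N σ ∩ A := ⟨h, hxA⟩
              rw [hepreσA] at this
              exact hxnot (by rw [epreList_append]; exact Or.inl this.1)
            · exact hxnot (by rw [epreList_append]; exact Or.inr h)
          · exfalso
            have : x ∈ N.pre t ∩ B := ⟨hxp, hxB⟩
            rw [hBem.1] at this
            exact this.elim
        · -- t inside tailB
          subst hm1
          subst hl1
          have htB : t ∈ remQ N B ∪ readQ N B := htailB_mem t (by rw [hy2]; simp)
          have hadjB : t ∈ adjQ N B := remread_subset N htB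
          have hAem := notAdj N (sep_notB N (sep_symm N hsep) hadjB)
          have htailA_preB : ∀ u ∈ tailA, N.pre u ∩ B = ∅ := fun u hu =>
            (notAdj N (sep_notB N hsep (htailA_adj u hu))).1
          have key : B ∩ N.pre t ⊆ B \ epreList N (σ.filter qB ++ k₁) := by
            by_cases hce : σ.filter qB ++ k₁ = []
            · rw [hce]
              rintro x ⟨hxB, _⟩
              refine ⟨hxB, ?_⟩
              simp [epreList]
            · exact hBcond (σ.filter qB ++ k₁) t k₂
                (by rw [hτB, hy2, List.append_assoc]) hce
          rintro x ⟨hxAB, hxp⟩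
          rcases hxAB with hxA | hxB
          · exfalso
            have : x ∈ N.pre t ∩ A := ⟨hxp, hxA⟩
            rw [hAem.1] at this
            exact this.elim
          · obtain ⟨_, hxnot⟩ := key ⟨hxB, hxp⟩
            refine ⟨Or.inr hxB, fun hc => ?_⟩
            rw [epreList_append, epreList_append] at hc
            rcases hc with h | h | h
            · have : x ∈ epreList N σ ∩ B := ⟨h, hxB⟩
              rw [hepreσB] at this
              exact hxnot (by rw [epreList_append]; exact Or.inl this.1)
            · rw [mem_epreList] at h
              obtain ⟨u, hu, hxu⟩ := h
              have : x ∈ N.pre u ∩ B := ⟨hxu.1, hxB⟩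
              rw [htailA_preB u hu] at this
              exact this.elim
            · exact hxnot (by rw [epreList_append]; exact Or.inr h)
  · -- coverage
    rintro x (hx | hx)
    · have hx1 : x ∈ epreList N τA := hCA.2 hx
      rw [hτA, epreList_append] at hx1
      rw [epreList_append, epreList_append]
      rcases hx1 with h | h
      · exact Or.inl (epreList_mono N (fun u hu => (List.mem_filter.mp hu).1) h)
      · exact Or.inr (Or.inl h)
    · have hx1 : x ∈ epreList N τB := hCB.2 hx
      rw [hτB, epreList_append] at hx1
      rw [epreList_append, epreList_append]
      rcases hx1 with h | h
      · exact Or.inl (epreList_mono N (fun u hu => (List.mem_filter.mp hu).1) h)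
      · exact Or.inr (Or.inr h)

end MainOut

section Fwd

variable (N : Net P T)

lemma FwdIns {A B : Set P} (hsep : separated N A B) (hU : distPlace N (A ∪ B))
    (hBne : B.Nonempty) (hiA : (insQ N A).Nonempty) : (insQ N B).Nonempty := by
  rw [Set.nonempty_iff_ne_empty]
  intro hiB
  obtain ⟨t, htA⟩ := hiA
  have hin : isInSeq N (A ∪ B) [t] :=
    isInSeq_single N (by rw [insQ_union N hsep]; exact Or.inl htA)
  obtain ⟨τ, _, hCτ⟩ := hU.2.2.2.1 [t] hin
  obtain ⟨b, hb⟩ := hBne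
  have hbτ : b ∈ postList N τ := hCτ.2 (Or.inr hb)
  obtain ⟨l₁, u, l₂, hτeq, hbu, hbl₁⟩ := exists_first N hbτ
  have hτin := hCτ.1
  rw [isInSeq_iff] at hτin
  obtain ⟨_, hτelem, hτhead, hτcond⟩ := hτin
  have huadjB : u ∈ adjQ N B := Or.inl ⟨b, hbu, hb⟩
  have humem := hτelem u (by rw [hτeq]; simp)
  have huread : u ∈ readQ N B := by
    rcases humem with h | h
    · rw [insQ_union N hsep] at h
      rcases h with h | h
      · exact absurd huadjB (sep_notB N hsep (insQ_subset N h))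
      · rw [hiB] at h
        exact h.elim
    · rw [readQ_union N hsep] at h
      rcases h with h | h
      · exact absurd huadjB (sep_notB N hsep (readQ_subset N h))
      · exact h
  have hbpre : b ∈ N.pre u := by
    have : b ∈ N.pre u ∩ B := by
      rw [readQ_eq N huread]
      exact ⟨hbu, hb⟩
    exact this.1
  cases l₁ with
  | nil =>
    have hh : u ∈ insQ N (A ∪ B) := hτhead u (by rw [hτeq]; rfl)
    rw [insQ_union N hsep] at hh
    rcases hh with h | h
    · exact absurd huadjB (sep_notB N hsep (insQ_subset N h))
    · rw [hiB] at h
      exact h.elim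
  | cons c l₁' =>
    have := (hτcond (c :: l₁') u l₂ hτeq (List.cons_ne_nil _ _)).1 ⟨Or.inr hb, hbpre⟩
    exact hbl₁ this

lemma FwdRem {A B : Set P} (hsep : separated N A B) (hU : distPlace N (A ∪ B))
    (hBne : B.Nonempty) (hrA : (remQ N A).Nonempty) : (remQ N B).Nonempty := by
  rw [Set.nonempty_iff_ne_empty]
  intro hrB
  obtain ⟨t, htA⟩ := hrA
  have hout : isOutSeq N (A ∪ B) [t] :=
    isOutSeq_single N (by rw [remQ_union N hsep]; exact Or.inl htA)
  obtain ⟨τ, _, hCτ⟩ := hU.2.2.2.2 [t] hout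
  obtain ⟨b, hb⟩ := hBne
  have hbτ : b ∈ epreList N τ := hCτ.2 (Or.inr hb)
  rw [mem_epreList] at hbτ
  obtain ⟨u, huτ, hbu⟩ := hbτ
  have hτout := hCτ.1
  rw [isOutSeq_iff] at hτout
  obtain ⟨_, hτelem, _, _⟩ := hτout
  have huadjB : u ∈ adjQ N B := Or.inr ⟨b, hbu.1, hb⟩
  have humem := hτelem u huτ
  have huread : u ∈ readQ N B := by
    rcases humem with h | h
    · rw [remQ_union N hsep] at h
      rcases h with h | h
      · exact absurd huadjB (sep_notB N hsep (remQ_subset N h))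
      · rw [hrB] at h
        exact h.elim
    · rw [readQ_union N hsep] at h
      rcases h with h | h
      · exact absurd huadjB (sep_notB N hsep (readQ_subset N h))
      · exact h
  have : b ∈ N.post u := by
    have : b ∈ N.post u ∩ B := by
      rw [← readQ_eq N huread]
      exact ⟨hbu.1, hb⟩
    exact this.1
  exact hbu.2 this

lemma FwdCross {A B : Set P} (hsep : separated N A B) (hU : distPlace N (A ∪ B))
    (hiA : (insQ N A).Nonempty) (hrB : (remQ N B).Nonempty) : False := by
  obtain ⟨t, ht⟩ := hiA
  obtain ⟨u, hu⟩ := hrB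
  have htU : t ∈ insQ N (A ∪ B) := by rw [insQ_union N hsep]; exact Or.inl ht
  have huU : u ∈ remQ N (A ∪ B) := by rw [remQ_union N hsep]; exact Or.inr hu
  obtain ⟨x, ⟨hxAB, hxpp⟩, hxpre⟩ := hU.2.2.1 t htU u huU
  rcases hxAB with hxA | hxB
  · have huadjA : u ∈ adjQ N A := Or.inr ⟨x, hxpre, hxA⟩
    exact sep_notB N hsep huadjA (remQ_subset N hu)
  · have htadjB : t ∈ adjQ N B := Or.inl ⟨x, hxpp.1, hxB⟩
    exact sep_notB N hsep (insQ_subset N ht) htadjB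

end Fwd

section Assembly

variable (N : Net P T)

lemma noInSeq {Q : Set P} (h : insQ N Q = ∅) {σ : List T} (hσ : isInSeq N Q σ) : False := by
  obtain ⟨s₀, σ', rfl⟩ := List.exists_cons_of_ne_nil hσ.1
  have := hσ.2.2.1 s₀ rfl
  rw [h] at this
  exact Set.notMem_empty _ this

lemma noOutSeq {Q : Set P} (h : remQ N Q = ∅) {σ : List T} (hσ : isOutSeq N Q σ) : False := by
  obtain ⟨s₀, σ', rfl⟩ := List.exists_cons_of_ne_nil hσ.1
  have := hσ.2.2.1 s₀ rfl
  rw [h] at this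
  exact Set.notMem_empty _ this

end Assembly
/-- the union of two separated distributed places is a distributed place
iff one of the three listed emptiness patterns holds. -/
theorem stmt8 (N : Net P T) (A B : Set P)
    (hA : distPlace N A) (hB : distPlace N B)
    (hsep : separated N A B) (hdisj : Disjoint A B) :
    distPlace N (A ∪ B) ↔
      (insQ N A = ∅ ∧ insQ N B = ∅ ∧ remQ N A = ∅ ∧ remQ N B = ∅) ∨
      (insQ N A = ∅ ∧ insQ N B = ∅ ∧ (remQ N A).Nonempty ∧ (remQ N B).Nonempty) ∨
      ((insQ N A).Nonempty ∧ (insQ N B).Nonempty ∧ remQ N A = ∅ ∧ remQ N B = ∅) := by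
  have hsep' := sep_symm N hsep
  constructor
  · intro hU
    have hU' : distPlace N (B ∪ A) := by rwa [Set.union_comm] at hU
    by_cases hiA : insQ N A = ∅
    · have hiB : insQ N B = ∅ := by
        by_contra h
        have h' := Set.nonempty_iff_ne_empty.mpr h
        have := FwdIns N hsep' hU' hA.1 h'
        rw [hiA] at this
        exact this.ne_empty rfl
      by_cases hrA : remQ N A = ∅
      · have hrB : remQ N B = ∅ := by
          by_contra h
          have h' := Set.nonempty_iff_ne_empty.mpr h
          have := FwdRem N hsep' hU' hA.1 h'
          rw [hrA] at this
          exact this.ne_empty rfl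
        exact Or.inl ⟨hiA, hiB, hrA, hrB⟩
      · have hrA' := Set.nonempty_iff_ne_empty.mpr hrA
        have hrB := FwdRem N hsep hU hB.1 hrA'
        exact Or.inr (Or.inl ⟨hiA, hiB, hrA', hrB⟩)
    · have hiA' := Set.nonempty_iff_ne_empty.mpr hiA
      have hiB := FwdIns N hsep hU hB.1 hiA'
      have hrB : remQ N B = ∅ := by
        by_contra h
        exact FwdCross N hsep hU hiA' (Set.nonempty_iff_ne_empty.mpr h)
      have hrA : remQ N A = ∅ := by
        by_contra h
        exact FwdCross N hsep' hU' hiB (Set.nonempty_iff_ne_empty.mpr h)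
      exact Or.inr (Or.inr ⟨hiA', hiB, hrA, hrB⟩)
  · intro hcase
    have hne : (A ∪ B).Nonempty := hA.1.mono Set.subset_union_left
    have hadj : adjQ N (A ∪ B) = insQ N (A ∪ B) ∪ remQ N (A ∪ B) ∪ readQ N (A ∪ B) := by
      rw [adjQ_union, insQ_union N hsep, remQ_union N hsep, readQ_union N hsep,
        hA.2.1, hB.2.1]
      ext t
      simp only [Set.mem_union]
      tauto
    rcases hcase with ⟨h1, h2, h3, h4⟩ | ⟨h1, h2, h3, h4⟩ | ⟨h1, h2, h3, h4⟩
    · have hinsU : insQ N (A ∪ B) = ∅ := by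
        rw [insQ_union N hsep, h1, h2, Set.union_empty]
      have hremU : remQ N (A ∪ B) = ∅ := by
        rw [remQ_union N hsep, h3, h4, Set.union_empty]
      refine ⟨hne, hadj, ?_, ?_, ?_⟩
      · intro t ht
        rw [hinsU] at ht
        exact absurd ht (Set.notMem_empty t)
      · intro σ hσ
        exact absurd hσ (fun h => noInSeq N hinsU h)
      · intro σ hσ
        exact absurd hσ (fun h => noOutSeq N hremU h)
    · have hinsU : insQ N (A ∪ B) = ∅ := by
        rw [insQ_union N hsep, h1, h2, Set.union_empty]
      refine ⟨hne, hadj, ?_, ?_, ?_⟩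
      · intro t ht
        rw [hinsU] at ht
        exact absurd ht (Set.notMem_empty t)
      · intro σ hσ
        exact absurd hσ (fun h => noInSeq N hinsU h)
      · exact OutExt N hsep hA hB h3 h4
    · have hremU : remQ N (A ∪ B) = ∅ := by
        rw [remQ_union N hsep, h3, h4, Set.union_empty]
      refine ⟨hne, hadj, ?_, ?_, ?_⟩
      · intro t _ u hu
        rw [hremU] at hu
        exact absurd hu (Set.notMem_empty u)
      · exact InExt N hsep hA hB h1 h2
      · intro σ hσ
        exact absurd hσ (fun h => noOutSeq N hremU h)
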